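/- Let n ≥ 1, let b₁, b₂ ∈ ℤ^n, and let h₁, h₂ : ℝ^n → ℂ be continuously differentiable and bounded, with bounded and Lipschitz continuous gradients. Then the Weyl quantization operators on ℓ²(ℤ^n, ℂ) satisfy Dirac's condition: ‖(i/ℏ)·(Q_{ℏ,b₁,h₁} Q_{ℏ,b₂,h₂} − Q_{ℏ,b₂,h₂} Q_{ℏ,b₁,h₁}) − Q_{ℏ,b₁+b₂,P}‖ → 0 as ℏ → 0 (operator norm; limit over real ℏ ≠ 0), where P : ℝ^n → ℂ is P(p) := 2πi·((∇h₁(p)·b₂)·h₂(p) − h₁(p)·(∇h₂(p)·b₁)); here e_{b₁+b₂} ⊗ P is the Poisson bracket {e_{b₁} ⊗ h₁, e_{b₂} ⊗ h₂} of the corresponding phase-space functions on T*T^n. -/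

import Mathlib

/-!
All three operators shift by `b₁ + b₂`, so `(i/ℏ)[Q₁, Q₂] − Q_P` is a weighted shift, whose norm
is at most the supremum of its weight. At `p = 2πℏ(a − (b₁ + b₂)/2)` that weight is `i/ℏ` times
`h₁(p + πℏb₂) h₂(p − πℏb₁) − h₂(p + πℏb₁) h₁(p − πℏb₂) − 2πℏ(∇h₁(p)·b₂ h₂(p) − h₁(p) ∇h₂(p)·b₁)`,
and a second-order Taylor expansion (the gradients being Lipschitz) makes this `O(ℏ²)`. Hence the
operator norm is `O(ℏ)`.
-/

open Topology

/-- `ℓ²(ℤⁿ, ℂ)`, the Hilbert space `L²(Tⁿ)` in the Fourier basis. -/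
noncomputable abbrev HilSp (n : ℕ) := lp (fun _ : Fin n → ℤ => ℂ) 2

open ENNReal NNReal

theorem lp.opNorm_le_of_weighted_shift {G : Type*} [AddGroup G] {p : ℝ≥0∞} [Fact (1 ≤ p)]
    (hp : p ≠ ∞) (T : lp (fun _ : G => ℂ) p →L[ℂ] lp (fun _ : G => ℂ) p) (b : G) (g : G → ℂ)
    (hT : ∀ ψ a, T ψ a = g a * ψ (a - b)) {K : ℝ} (hg : ∀ a, ‖g a‖ ≤ K) : ‖T‖ ≤ K := by
  have hK : 0 ≤ K := (norm_nonneg _).trans (hg 0)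
  have hp₀ : 0 < p.toReal := ENNReal.toReal_pos (zero_lt_one.trans_le Fact.out).ne' hp
  refine T.opNorm_le_bound hK fun ψ => lp.norm_le_of_tsum_le hp₀ (by positivity) ?_
  have hψ : Summable fun a => ‖ψ (a - b)‖ ^ p.toReal :=
    (Equiv.subRight b).summable_iff.2 ((lp.memℓp ψ).summable hp₀)
  calc ∑' a, ‖T ψ a‖ ^ p.toReal
      ≤ ∑' a, K ^ p.toReal * ‖ψ (a - b)‖ ^ p.toReal := by
        refine ((lp.memℓp (T ψ)).summable hp₀).tsum_le_tsum (fun a => ?_) (hψ.mul_left _)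
        rw [hT, norm_mul, ← Real.mul_rpow hK (norm_nonneg _)]
        gcongr
        exact hg a
    _ = K ^ p.toReal * ∑' a, ‖ψ (a - b)‖ ^ p.toReal := tsum_mul_left
    _ = K ^ p.toReal * ‖ψ‖ ^ p.toReal := by
        rw [lp.norm_rpow_eq_tsum hp₀, ← (Equiv.subRight b).tsum_eq fun a => ‖ψ a‖ ^ p.toReal]
        rfl
    _ = (K * ‖ψ‖) ^ p.toReal := (Real.mul_rpow hK (norm_nonneg _)).symm

section Calculus

variable {E : Type*} [NormedAddCommGroup E] [NormedSpace ℝ E]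

section Taylor

variable {F : Type*} [NormedAddCommGroup F] [NormedSpace ℝ F] {f : E → F} {L : ℝ≥0}

theorem norm_sub_sub_fderiv_le_of_lipschitzWith (hf : Differentiable ℝ f)
    (hL : LipschitzWith L (fderiv ℝ f)) (p v : E) :
    ‖f (p + v) - f p - fderiv ℝ f p v‖ ≤ L * ‖v‖ ^ 2 := by
  have h := (convex_closedBall p ‖v‖).norm_image_sub_le_of_norm_fderiv_le'
    (φ := fderiv ℝ f p) (C := L * ‖v‖) (fun x _ => hf x) (fun x hx => ?_)
    (Metric.mem_closedBall_self (norm_nonneg v)) (x := p) (y := p + v) (by simp)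
  · simpa [sq, mul_assoc] using h
  · rw [← dist_eq_norm]
    exact (hL.dist_le_mul x p).trans (by gcongr; exact hx)

theorem norm_sub_sub_two_fderiv_le_of_lipschitzWith (hf : Differentiable ℝ f)
    (hL : LipschitzWith L (fderiv ℝ f)) (p v : E) :
    ‖f (p + v) - f (p - v) - 2 • fderiv ℝ f p v‖ ≤ 2 * L * ‖v‖ ^ 2 := by
  have hplus := norm_sub_sub_fderiv_le_of_lipschitzWith hf hL p v
  have hminus := norm_sub_sub_fderiv_le_of_lipschitzWith hf hL p (-v)
  rw [map_neg, sub_neg_eq_add, norm_neg, ← sub_eq_add_neg] at hminus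
  calc ‖f (p + v) - f (p - v) - 2 • fderiv ℝ f p v‖
      = ‖(f (p + v) - f p - fderiv ℝ f p v) - (f (p - v) - f p + fderiv ℝ f p v)‖ := by
        congr 1; rw [two_nsmul]; abel
    _ ≤ 2 * L * ‖v‖ ^ 2 := (norm_sub_le _ _).trans (by linarith)

end Taylor

/-- At `v = πℏb₁`, `w = πℏb₂` this is `ℏ/i` times the weight at `p` of the shift
`(i/ℏ)[Q_{ℏ,b₁,f}, Q_{ℏ,b₂,g}] − Q_{ℏ,b₁+b₂,P}`. -/
noncomputable def bracketRemainder (f g : E → ℂ) (p v w : E) : ℂ :=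
  f (p + w) * g (p - v) - g (p + v) * f (p - w) -
    2 * (fderiv ℝ f p w * g p - f p * fderiv ℝ g p v)

theorem norm_bracketRemainder_le {f g : E → ℂ} (hf : Differentiable ℝ f)
    (hg : Differentiable ℝ g) {C₁ C₂ D₁ D₂ : ℝ} (hfC : ∀ p, ‖f p‖ ≤ C₁) (hgC : ∀ p, ‖g p‖ ≤ C₂)
    (hfD : ∀ p, ‖fderiv ℝ f p‖ ≤ D₁) (hgD : ∀ p, ‖fderiv ℝ g p‖ ≤ D₂) {L₁ L₂ : ℝ≥0}
    (hfL : LipschitzWith L₁ (fderiv ℝ f)) (hgL : LipschitzWith L₂ (fderiv ℝ g)) (p v w : E) :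
    ‖bracketRemainder f g p v w‖ ≤
      (2 * L₁ * C₂ + 2 * L₂ * C₁ + 4 * D₁ * D₂) * (‖v‖ + ‖w‖) ^ 2 := by
  have hC₁ : 0 ≤ C₁ := (norm_nonneg _).trans (hfC p)
  have hC₂ : 0 ≤ C₂ := (norm_nonneg _).trans (hgC p)
  have hD₁ : 0 ≤ D₁ := (norm_nonneg _).trans (hfD p)
  have hD₂ : 0 ≤ D₂ := (norm_nonneg _).trans (hgD p)
  have hcf := norm_sub_sub_two_fderiv_le_of_lipschitzWith hf hfL p w
  have hcg := norm_sub_sub_two_fderiv_le_of_lipschitzWith hg hgL p v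
  simp only [nsmul_eq_mul, Nat.cast_ofNat] at hcf hcg
  have hdf : ‖fderiv ℝ f p w‖ ≤ D₁ * ‖w‖ := (fderiv ℝ f p).le_of_opNorm_le (hfD p) w
  have hdg : ‖fderiv ℝ g p v‖ ≤ D₂ * ‖v‖ := (fderiv ℝ g p).le_of_opNorm_le (hgD p) v
  have hΔf : ‖f (p + w) - f p‖ ≤ D₁ * ‖w‖ := by
    simpa using convex_univ.norm_image_sub_le_of_norm_fderiv_le (fun x _ => hf x)
      (fun x _ => hfD x) (Set.mem_univ p) (Set.mem_univ (p + w))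
  have hΔg : ‖g (p + v) - g p‖ ≤ D₂ * ‖v‖ := by
    simpa using convex_univ.norm_image_sub_le_of_norm_fderiv_le (fun x _ => hg x)
      (fun x _ => hgD x) (Set.mem_univ p) (Set.mem_univ (p + v))
  -- Split off the two central-difference remainders; what is left pairs two first-order terms.
  have hsplit : bracketRemainder f g p v w =
      (f (p + w) - f (p - w) - 2 * fderiv ℝ f p w) * g (p + v)
        + 2 * fderiv ℝ f p w * (g (p + v) - g p)
        - f (p + w) * (g (p + v) - g (p - v) - 2 * fderiv ℝ g p v)
        - 2 * (f (p + w) - f p) * fderiv ℝ g p v := by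
    unfold bracketRemainder; ring
  calc ‖bracketRemainder f g p v w‖
      ≤ ‖f (p + w) - f (p - w) - 2 * fderiv ℝ f p w‖ * ‖g (p + v)‖
        + 2 * ‖fderiv ℝ f p w‖ * ‖g (p + v) - g p‖
        + ‖f (p + w)‖ * ‖g (p + v) - g (p - v) - 2 * fderiv ℝ g p v‖
        + 2 * ‖f (p + w) - f p‖ * ‖fderiv ℝ g p v‖ := by
        rw [hsplit]
        refine (norm_sub_le _ _).trans (add_le_add ((norm_sub_le _ _).trans
          (add_le_add ((norm_add_le _ _).trans (add_le_add ?_ ?_)) ?_)) ?_) <;>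
        simp
    _ ≤ 2 * L₁ * ‖w‖ ^ 2 * C₂ + 2 * (D₁ * ‖w‖) * (D₂ * ‖v‖)
        + C₁ * (2 * L₂ * ‖v‖ ^ 2) + 2 * (D₁ * ‖w‖) * (D₂ * ‖v‖) := by
        gcongr
        exacts [hgC _, hfC _]
    _ ≤ (2 * L₁ * C₂ + 2 * L₂ * C₁ + 4 * D₁ * D₂) * (‖v‖ + ‖w‖) ^ 2 := by
        have hv := norm_nonneg v
        have hw := norm_nonneg w
        have hL₁C₂ : 0 ≤ (L₁ : ℝ) * C₂ := mul_nonneg L₁.2 hC₂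
        have hL₂C₁ : 0 ≤ (L₂ : ℝ) * C₁ := mul_nonneg L₂.2 hC₁
        linarith [mul_nonneg hL₁C₂ (mul_nonneg hv (add_nonneg hv (add_nonneg hw hw))),
          mul_nonneg hL₂C₁ (mul_nonneg hw (add_nonneg hw (add_nonneg hv hv))),
          mul_nonneg (mul_nonneg hD₁ hD₂)
            (add_nonneg (sq_nonneg ‖v‖) (add_nonneg (sq_nonneg ‖w‖) (mul_nonneg hv hw)))]

end Calculus

theorem weyl_commutator_sub_apply {n : ℕ} {b₁ b₂ : Fin n → ℤ} {h₁ h₂ : (Fin n → ℝ) → ℂ}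
    {Q₁ Q₂ QP : ℝ → HilSp n →L[ℂ] HilSp n}
    (hQ₁ : ∀ (hbar : ℝ) (ψ : HilSp n) (a : Fin n → ℤ),
      (Q₁ hbar ψ) a =
        h₁ (fun i => 2 * Real.pi * hbar * ((a i : ℝ) - (b₁ i : ℝ) / 2)) * ψ (a - b₁))
    (hQ₂ : ∀ (hbar : ℝ) (ψ : HilSp n) (a : Fin n → ℤ),
      (Q₂ hbar ψ) a =
        h₂ (fun i => 2 * Real.pi * hbar * ((a i : ℝ) - (b₂ i : ℝ) / 2)) * ψ (a - b₂))
    (hQP : ∀ (hbar : ℝ) (ψ : HilSp n) (a : Fin n → ℤ),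
      (QP hbar ψ) a =
        (2 * Real.pi * Complex.I *
          (fderiv ℝ h₁ (fun i => 2 * Real.pi * hbar * ((a i : ℝ) - ((b₁ i : ℝ) + (b₂ i : ℝ)) / 2))
              (fun i => (b₂ i : ℝ)) *
            h₂ (fun i => 2 * Real.pi * hbar * ((a i : ℝ) - ((b₁ i : ℝ) + (b₂ i : ℝ)) / 2)) -
          h₁ (fun i => 2 * Real.pi * hbar * ((a i : ℝ) - ((b₁ i : ℝ) + (b₂ i : ℝ)) / 2)) *
            fderiv ℝ h₂ (fun i => 2 * Real.pi * hbar * ((a i : ℝ) - ((b₁ i : ℝ) + (b₂ i : ℝ)) / 2))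
              (fun i => (b₁ i : ℝ)))) *
        ψ (a - (b₁ + b₂)))
    {hbar : ℝ} (hbar₀ : hbar ≠ 0) (ψ : HilSp n) (a : Fin n → ℤ) :
    (((Complex.I / (hbar : ℂ)) • ((Q₁ hbar).comp (Q₂ hbar) - (Q₂ hbar).comp (Q₁ hbar)) -
        QP hbar) ψ) a =
      Complex.I / hbar * bracketRemainder h₁ h₂
        (fun i => 2 * Real.pi * hbar * ((a i : ℝ) - ((b₁ i : ℝ) + (b₂ i : ℝ)) / 2))
        ((Real.pi * hbar) • fun i => (b₁ i : ℝ)) ((Real.pi * hbar) • fun i => (b₂ i : ℝ)) *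
        ψ (a - (b₁ + b₂)) := by
  simp only [sub_apply, smul_apply, ContinuousLinearMap.comp_apply, lp.coeFn_sub,
    lp.coeFn_smul, Pi.sub_apply, Pi.smul_apply, smul_eq_mul, hQ₁, hQ₂, hQP, sub_sub,
    add_comm b₂ b₁]
  set p : Fin n → ℝ := fun i => 2 * Real.pi * hbar * ((a i : ℝ) - ((b₁ i : ℝ) + (b₂ i : ℝ)) / 2)
  set B₁ : Fin n → ℝ := fun i => (b₁ i : ℝ)
  set B₂ : Fin n → ℝ := fun i => (b₂ i : ℝ)
  have hp₁ : (fun i => 2 * Real.pi * hbar * ((a i : ℝ) - (b₁ i : ℝ) / 2)) =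
      p + (Real.pi * hbar) • B₂ := by
    ext i; simp [p, B₂]; ring
  have hp₂ : (fun i => 2 * Real.pi * hbar * (((a i - b₁ i : ℤ) : ℝ) - (b₂ i : ℝ) / 2)) =
      p - (Real.pi * hbar) • B₁ := by
    ext i; simp [p, B₁]; ring
  have hp₃ : (fun i => 2 * Real.pi * hbar * ((a i : ℝ) - (b₂ i : ℝ) / 2)) =
      p + (Real.pi * hbar) • B₁ := by
    ext i; simp [p, B₁]; ring
  have hp₄ : (fun i => 2 * Real.pi * hbar * (((a i - b₂ i : ℤ) : ℝ) - (b₁ i : ℝ) / 2)) =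
      p - (Real.pi * hbar) • B₂ := by
    ext i; simp [p, B₂]; ring
  rw [hp₁, hp₂, hp₃, hp₄, bracketRemainder, map_smul, map_smul, Complex.real_smul,
    Complex.real_smul]
  have hbar₀' : (hbar : ℂ) ≠ 0 := by exact_mod_cast hbar₀
  push_cast
  field_simp

theorem stmt16_general (n : ℕ) (b₁ b₂ : Fin n → ℤ)
    (h₁ h₂ : (Fin n → ℝ) → ℂ)
    (hC₁ : ContDiff ℝ 1 h₁) (hC₂ : ContDiff ℝ 1 h₂)
    (hbd₁ : ∃ C : ℝ, ∀ p, ‖h₁ p‖ ≤ C) (hbd₂ : ∃ C : ℝ, ∀ p, ‖h₂ p‖ ≤ C)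
    (hdbd₁ : ∃ C : ℝ, ∀ p, ‖fderiv ℝ h₁ p‖ ≤ C) (hdbd₂ : ∃ C : ℝ, ∀ p, ‖fderiv ℝ h₂ p‖ ≤ C)
    (hdLip₁ : ∃ L : NNReal, LipschitzWith L (fderiv ℝ h₁))
    (hdLip₂ : ∃ L : NNReal, LipschitzWith L (fderiv ℝ h₂))
    (Q₁ Q₂ QP : ℝ → HilSp n →L[ℂ] HilSp n)
    (hQ₁ : ∀ (hbar : ℝ) (ψ : HilSp n) (a : Fin n → ℤ),
      (Q₁ hbar ψ) a =
        h₁ (fun i => 2 * Real.pi * hbar * ((a i : ℝ) - (b₁ i : ℝ) / 2)) * ψ (a - b₁))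
    (hQ₂ : ∀ (hbar : ℝ) (ψ : HilSp n) (a : Fin n → ℤ),
      (Q₂ hbar ψ) a =
        h₂ (fun i => 2 * Real.pi * hbar * ((a i : ℝ) - (b₂ i : ℝ) / 2)) * ψ (a - b₂))
    (hQP : ∀ (hbar : ℝ) (ψ : HilSp n) (a : Fin n → ℤ),
      (QP hbar ψ) a =
        (2 * Real.pi * Complex.I *
          (fderiv ℝ h₁ (fun i => 2 * Real.pi * hbar * ((a i : ℝ) - ((b₁ i : ℝ) + (b₂ i : ℝ)) / 2))
              (fun i => (b₂ i : ℝ)) *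
            h₂ (fun i => 2 * Real.pi * hbar * ((a i : ℝ) - ((b₁ i : ℝ) + (b₂ i : ℝ)) / 2)) -
          h₁ (fun i => 2 * Real.pi * hbar * ((a i : ℝ) - ((b₁ i : ℝ) + (b₂ i : ℝ)) / 2)) *
            fderiv ℝ h₂ (fun i => 2 * Real.pi * hbar * ((a i : ℝ) - ((b₁ i : ℝ) + (b₂ i : ℝ)) / 2))
              (fun i => (b₁ i : ℝ)))) *
        ψ (a - (b₁ + b₂))) :
    Filter.Tendsto (fun hbar : ℝ =>
        ‖(Complex.I / (hbar : ℂ)) • ((Q₁ hbar).comp (Q₂ hbar) - (Q₂ hbar).comp (Q₁ hbar)) -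
          QP hbar‖)
      (𝓝[≠] (0 : ℝ)) (𝓝 0) := by
  obtain ⟨C₁, hh₁⟩ := hbd₁
  obtain ⟨C₂, hh₂⟩ := hbd₂
  obtain ⟨D₁, hdh₁⟩ := hdbd₁
  obtain ⟨D₂, hdh₂⟩ := hdbd₂
  obtain ⟨L₁, hL₁⟩ := hdLip₁
  obtain ⟨L₂, hL₂⟩ := hdLip₂
  set B₁ : Fin n → ℝ := fun i => (b₁ i : ℝ)
  set B₂ : Fin n → ℝ := fun i => (b₂ i : ℝ)
  set M := 2 * L₁ * C₂ + 2 * L₂ * C₁ + 4 * D₁ * D₂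
  have hbound : ∀ hbar : ℝ, hbar ≠ 0 →
      ‖(Complex.I / (hbar : ℂ)) • ((Q₁ hbar).comp (Q₂ hbar) - (Q₂ hbar).comp (Q₁ hbar)) -
        QP hbar‖ ≤ M * (Real.pi * (‖B₁‖ + ‖B₂‖)) ^ 2 * |hbar| := by
    intro hbar hbar₀
    refine lp.opNorm_le_of_weighted_shift ENNReal.ofNat_ne_top _ (b₁ + b₂) _
      (weyl_commutator_sub_apply hQ₁ hQ₂ hQP hbar₀) fun a => ?_
    calc _ = |hbar|⁻¹ * ‖bracketRemainder h₁ h₂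
          (fun i => 2 * Real.pi * hbar * ((a i : ℝ) - ((b₁ i : ℝ) + (b₂ i : ℝ)) / 2))
          ((Real.pi * hbar) • B₁) ((Real.pi * hbar) • B₂)‖ := by
          rw [norm_mul, norm_div, Complex.norm_I, Complex.norm_real, Real.norm_eq_abs, one_div]
      _ ≤ |hbar|⁻¹ * (M * (‖(Real.pi * hbar) • B₁‖ + ‖(Real.pi * hbar) • B₂‖) ^ 2) := by
          gcongr
          exact norm_bracketRemainder_le (hC₁.differentiable one_ne_zero)
            (hC₂.differentiable one_ne_zero) hh₁ hh₂ hdh₁ hdh₂ hL₁ hL₂ _ _ _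
      _ = M * (Real.pi * (‖B₁‖ + ‖B₂‖)) ^ 2 * |hbar| := by
          rw [norm_smul, norm_smul, Real.norm_eq_abs, abs_mul, abs_of_pos Real.pi_pos]
          field_simp
  have hlim : Filter.Tendsto (fun hbar : ℝ => M * (Real.pi * (‖B₁‖ + ‖B₂‖)) ^ 2 * |hbar|)
      (𝓝 0) (𝓝 0) := by
    simpa using tendsto_const_nhds.mul (continuous_abs.tendsto (0 : ℝ))
  exact squeeze_zero' (Filter.Eventually.of_forall fun _ => norm_nonneg _)
    (eventually_nhdsWithin_of_forall hbound) (hlim.mono_left nhdsWithin_le_nhds)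

/-- Dirac's condition for Weyl quantization on the torus:  for `C¹`, bounded
`h₁, h₂ : ℝⁿ → ℂ` with bounded, Lipschitz gradients and `b₁, b₂ ∈ ℤⁿ`, the Weyl
quantization operators (specified through their defining pointwise formulas
`(Q_{ℏ,b,h}ψ)(a) = h(2πℏ(a − b/2))·ψ(a − b)`) satisfy
`‖(i/ℏ)(Q_{ℏ,b₁,h₁}Q_{ℏ,b₂,h₂} − Q_{ℏ,b₂,h₂}Q_{ℏ,b₁,h₁}) − Q_{ℏ,b₁+b₂,P}‖ → 0` as
`ℏ → 0` over `ℝ \ {0}`, where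
`P(p) = 2πi·((∇h₁(p)·b₂)·h₂(p) − h₁(p)·(∇h₂(p)·b₁))`. -/
theorem stmt16 (n : ℕ) (hn : 1 ≤ n) (b₁ b₂ : Fin n → ℤ)
    (h₁ h₂ : (Fin n → ℝ) → ℂ)
    (hC₁ : ContDiff ℝ 1 h₁) (hC₂ : ContDiff ℝ 1 h₂)
    (hbd₁ : ∃ C : ℝ, ∀ p, ‖h₁ p‖ ≤ C) (hbd₂ : ∃ C : ℝ, ∀ p, ‖h₂ p‖ ≤ C)
    (hdbd₁ : ∃ C : ℝ, ∀ p, ‖fderiv ℝ h₁ p‖ ≤ C) (hdbd₂ : ∃ C : ℝ, ∀ p, ‖fderiv ℝ h₂ p‖ ≤ C)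
    (hdLip₁ : ∃ L : NNReal, LipschitzWith L (fderiv ℝ h₁))
    (hdLip₂ : ∃ L : NNReal, LipschitzWith L (fderiv ℝ h₂))
    (Q₁ Q₂ QP : ℝ → HilSp n →L[ℂ] HilSp n)
    (hQ₁ : ∀ (hbar : ℝ) (ψ : HilSp n) (a : Fin n → ℤ),
      (Q₁ hbar ψ) a =
        h₁ (fun i => 2 * Real.pi * hbar * ((a i : ℝ) - (b₁ i : ℝ) / 2)) * ψ (a - b₁))
    (hQ₂ : ∀ (hbar : ℝ) (ψ : HilSp n) (a : Fin n → ℤ),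
      (Q₂ hbar ψ) a =
        h₂ (fun i => 2 * Real.pi * hbar * ((a i : ℝ) - (b₂ i : ℝ) / 2)) * ψ (a - b₂))
    (hQP : ∀ (hbar : ℝ) (ψ : HilSp n) (a : Fin n → ℤ),
      (QP hbar ψ) a =
        (2 * Real.pi * Complex.I *
          (fderiv ℝ h₁ (fun i => 2 * Real.pi * hbar * ((a i : ℝ) - ((b₁ i : ℝ) + (b₂ i : ℝ)) / 2))
              (fun i => (b₂ i : ℝ)) *
            h₂ (fun i => 2 * Real.pi * hbar * ((a i : ℝ) - ((b₁ i : ℝ) + (b₂ i : ℝ)) / 2)) -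
          h₁ (fun i => 2 * Real.pi * hbar * ((a i : ℝ) - ((b₁ i : ℝ) + (b₂ i : ℝ)) / 2)) *
            fderiv ℝ h₂ (fun i => 2 * Real.pi * hbar * ((a i : ℝ) - ((b₁ i : ℝ) + (b₂ i : ℝ)) / 2))
              (fun i => (b₁ i : ℝ)))) *
        ψ (a - (b₁ + b₂))) :
    Filter.Tendsto (fun hbar : ℝ =>
        ‖(Complex.I / (hbar : ℂ)) • ((Q₁ hbar).comp (Q₂ hbar) - (Q₂ hbar).comp (Q₁ hbar)) -
          QP hbar‖)
      (𝓝[≠] (0 : ℝ)) (𝓝 0) :=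
  stmt16_general n b₁ b₂ h₁ h₂ hC₁ hC₂ hbd₁ hbd₂ hdbd₁ hdbd₂ hdLip₁ hdLip₂ Q₁ Q₂ QP hQ₁ hQ₂ hQP
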